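/- G*₋₁(x,y) = 0 if and only if x = y. -/
import Mathlib


/-- mex of a finite set of integers: least nonnegative integer not in the set
(negative elements are ignored). -/
noncomputable def mexZ (S : Finset ℤ) : ℤ := ((sInf {n : ℕ | (n : ℤ) ∉ S} : ℕ) : ℤ)

/-- `G*₋₁(x,y)`: `G*₋₁(0,0) = 0`, `G*₋₁(0,1) = G*₋₁(1,0) = -1`, and for `x + y > 1`,
`G*₋₁(x,y) = mex({G*₋₁(x',y) : x' < x} ∪ {G*₋₁(x,y') : y' < y})`. -/
noncomputable def Gs : ℕ → ℕ → ℤ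
  | x, y =>
    if x + y = 0 then 0 else if x + y = 1 then -1 else
    mexZ (((Finset.range x).attach.image fun x' => Gs x'.1 y) ∪
          ((Finset.range y).attach.image fun y' => Gs x y'.1))
termination_by x y => x + y
decreasing_by
  · have := x'.2; simp only [Finset.mem_range] at this; omega
  · have := y'.2; simp only [Finset.mem_range] at this; omega

lemma mexZ_eq_zero {S : Finset ℤ} (h : (0:ℤ) ∉ S) : mexZ S = 0 := by
  have h0 : (0:ℕ) ∈ {n : ℕ | (n : ℤ) ∉ S} := by simpa using h
  have := Nat.sInf_le h0
  have : sInf {n : ℕ | (n : ℤ) ∉ S} = 0 := Nat.le_zero.mp this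
  simp [mexZ, this]

lemma mexZ_ne_zero {S : Finset ℤ} (h : (0:ℤ) ∈ S) : mexZ S ≠ 0 := by
  have hfin : {n : ℕ | (n : ℤ) ∈ S}.Finite :=
    S.finite_toSet.preimage ((Nat.cast_injective : Function.Injective (Nat.cast : ℕ → ℤ)).injOn)
  have hne : {n : ℕ | (n : ℤ) ∉ S}.Nonempty := by
    have := hfin.infinite_compl
    exact this.nonempty
  have hmem := Nat.sInf_mem hne
  have h0 : (0:ℕ) ∉ {n : ℕ | (n : ℤ) ∉ S} := by simpa using h
  intro hc
  unfold mexZ at hc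
  have : sInf {n : ℕ | (n : ℤ) ∉ S} = 0 := by exact_mod_cast hc
  rw [this] at hmem
  exact h0 hmem

theorem Gs_eq_zero_iff (x y : ℕ) : Gs x y = 0 ↔ x = y := by
  have key : ∀ n x y : ℕ, x + y = n → (Gs x y = 0 ↔ x = y) := by
    intro n
    induction n using Nat.strong_induction_on with
    | _ n ih =>
      intro x y hxy
      rw [Gs]
      by_cases h0 : x + y = 0
      · have hx : x = 0 := by omega
        have hy : y = 0 := by omega
        subst hx; subst hy; simp
      by_cases h1 : x + y = 1
      · rw [if_neg h0, if_pos h1]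
        constructor
        · intro hc; norm_num at hc
        · intro hc; omega
      rw [if_neg h0, if_neg h1]
      constructor
      · intro hz
        by_contra hne
        rcases Nat.lt_or_ge x y with hlt | hge
        · -- x < y : Gs x x = 0 is in the column set
          have hxx : Gs x x = 0 := (ih (x + x) (by omega) x x rfl).mpr rfl
          have hmem : (0:ℤ) ∈ (((Finset.range x).attach.image fun x' => Gs x'.1 y) ∪
              ((Finset.range y).attach.image fun y' => Gs x y'.1)) := by
            refine Finset.mem_union_right _ ?_
            refine Finset.mem_image.mpr ⟨⟨x, Finset.mem_range.mpr hlt⟩, Finset.mem_attach _ _, hxx⟩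
          exact mexZ_ne_zero hmem hz
        · have hlt' : y < x := by omega
          have hyy : Gs y y = 0 := (ih (y + y) (by omega) y y rfl).mpr rfl
          have hmem : (0:ℤ) ∈ (((Finset.range x).attach.image fun x' => Gs x'.1 y) ∪
              ((Finset.range y).attach.image fun y' => Gs x y'.1)) := by
            refine Finset.mem_union_left _ ?_
            refine Finset.mem_image.mpr ⟨⟨y, Finset.mem_range.mpr hlt'⟩, Finset.mem_attach _ _, hyy⟩
          exact mexZ_ne_zero hmem hz
      · rintro rfl
        apply mexZ_eq_zero
        intro hmem
        rcases Finset.mem_union.mp hmem with hm | hm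
        · obtain ⟨⟨x', hx'⟩, _, hval⟩ := Finset.mem_image.mp hm
          have hx' := Finset.mem_range.mp hx'
          have := (ih (x' + x) (by omega) x' x rfl).mp hval
          omega
        · obtain ⟨⟨y', hy'⟩, _, hval⟩ := Finset.mem_image.mp hm
          have hy' := Finset.mem_range.mp hy'
          have := (ih (x + y') (by omega) x y' rfl).mp hval
          omega
  exact key (x + y) x y rfl
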